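/- arXiv:0905.1196 — 6 statements merged into one kernel-verified Lean document; each statement's English description precedes it below -/
import Mathlib

section
/- Let p be prime, n ≥ 1, e with 1 ≤ e ≤ n, and let Φ_1, ..., Φ_n be integers with Φ_j = 0 for j ≤ n - e and gcd(Φ_j, p) = 1 for j > n - e. Then as k ranges over 0, ..., p^n - 1 with p-adic digits a_j^{(k)} (so k = Σ_j a_j^{(k)} p^{j-1}), the integers Σ_{j=1}^{n} a_j^{(k)} Φ_j p^{n-j} run through a complete residue system modulo p^e, each residue occurring exactly p^{n-e} times. -/
/-!
Only the digits of `k` in positions `n - e, …, n - 1`, i.e. the digits of `q = k / p^(n-e)`,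
meet a nonzero `Φ_j`, so the sum depends on `q < p^e` alone, and each `q` comes from `p^(n-e)`
values of `k`. As a function of `q`, `Σ_i a_i u_i p^(e-1-i)` is injective modulo `p^e`:
modulo `p` only `a_{e-1} u_{e-1}` survives, and `u_{e-1}` is a unit, so the top digit is
recovered; what remains is `p` times the same sum for `e - 1`. An injection of `p^e` numbers
into `ZMod (p^e)` hits every residue exactly once.
-/

open Finset

def weightedDigitReversal (p : ℕ) (u : ℕ → ℤ) (e q : ℕ) : ℤ :=
  ∑ i ∈ range e, ((q / p ^ i % p : ℕ) : ℤ) * u i * (p : ℤ) ^ (e - 1 - i)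

lemma Nat.mod_pow_div_pow_mod {p i e : ℕ} (m : ℕ) (hi : i < e) :
    m % p ^ e / p ^ i % p = m / p ^ i % p := by
  have hdvd : p ^ i * p ∣ p ^ e := by rw [← pow_succ]; exact pow_dvd_pow p hi
  rw [← Nat.mod_mul_right_div_self, ← Nat.mod_mul_right_div_self, Nat.mod_mod_of_dvd _ hdvd]

lemma weightedDigitReversal_succ (p : ℕ) (u : ℕ → ℤ) (e q : ℕ) :
    weightedDigitReversal p u (e + 1) q =
      p * weightedDigitReversal p u e (q % p ^ e) + ((q / p ^ e % p : ℕ) : ℤ) * u e := by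
  rw [weightedDigitReversal, sum_range_succ, weightedDigitReversal, mul_sum]
  simp only [Nat.add_sub_cancel, Nat.sub_self, pow_zero, mul_one]
  congr 1
  refine sum_congr rfl fun i hi => ?_
  have hi : i < e := mem_range.mp hi
  rw [Nat.mod_pow_div_pow_mod q hi, show e - i = e - 1 - i + 1 by omega, pow_succ]
  ring

theorem eq_of_pow_dvd_weightedDigitReversal_sub {p : ℕ} (hp : 0 < p) {u : ℕ → ℤ} {e : ℕ}
    (hu : ∀ i < e, IsCoprime (u i) p) {q q' : ℕ} (hq : q < p ^ e) (hq' : q' < p ^ e)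
    (h : (p : ℤ) ^ e ∣ weightedDigitReversal p u e q - weightedDigitReversal p u e q') :
    q = q' := by
  induction e generalizing q q' with
  | zero => simp only [pow_zero, Nat.lt_one_iff] at hq hq'; omega
  | succ e ih =>
    have hd : q / p ^ e < p := Nat.div_lt_of_lt_mul (by rwa [← pow_succ])
    have hd' : q' / p ^ e < p := Nat.div_lt_of_lt_mul (by rwa [← pow_succ])
    rw [weightedDigitReversal_succ, weightedDigitReversal_succ, Nat.mod_eq_of_lt hd,
      Nat.mod_eq_of_lt hd'] at h
    set r := weightedDigitReversal p u e (q % p ^ e)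
    set r' := weightedDigitReversal p u e (q' % p ^ e)
    have hsplit : (p * r + (q / p ^ e : ℕ) * u e) - (p * r' + (q' / p ^ e : ℕ) * u e) =
        p * (r - r') + ((q / p ^ e : ℕ) - (q' / p ^ e : ℕ) : ℤ) * u e := by ring
    rw [hsplit] at h
    have htop : q / p ^ e = q' / p ^ e := by
      have hpdvd : (p : ℤ) ∣ ((q / p ^ e : ℕ) - (q' / p ^ e : ℕ) : ℤ) * u e :=
        (dvd_add_right (dvd_mul_right _ _)).mp ((dvd_pow_self _ e.succ_ne_zero).trans h)
      exact ((Nat.modEq_iff_dvd.mpr ((hu e e.lt_succ_self).symm.dvd_of_dvd_mul_right hpdvd)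
        ).eq_of_lt_of_lt hd' hd).symm
    have hlow : q % p ^ e = q' % p ^ e := by
      refine ih (fun i hi => hu i (hi.trans e.lt_succ_self)) (Nat.mod_lt _ (pow_pos hp e))
        (Nat.mod_lt _ (pow_pos hp e)) ?_
      rw [htop, sub_self, zero_mul, add_zero, pow_succ'] at h
      exact (mul_dvd_mul_iff_left (by exact_mod_cast hp.ne')).mp h
    rw [← Nat.div_add_mod q (p ^ e), ← Nat.div_add_mod q' (p ^ e), htop, hlow]

theorem card_filter_weightedDigitReversal_eq {p : ℕ} (hp : 0 < p) {u : ℕ → ℤ} {e : ℕ}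
    (hu : ∀ i < e, IsCoprime (u i) p) (c : ZMod (p ^ e)) :
    #{q ∈ range (p ^ e) | (weightedDigitReversal p u e q : ZMod (p ^ e)) = c} = 1 := by
  have : NeZero (p ^ e) := ⟨(pow_pos hp e).ne'⟩
  have hinj :
      Set.InjOn (fun q => (weightedDigitReversal p u e q : ZMod (p ^ e))) (range (p ^ e)) := by
    intro q hq q' hq' h
    refine eq_of_pow_dvd_weightedDigitReversal_sub hp hu (mem_range.mp hq) (mem_range.mp hq') ?_
    exact_mod_cast (ZMod.intCast_eq_intCast_iff_dvd_sub _ _ _).mp h.symm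
  obtain ⟨q, hq, hqc⟩ := surjOn_of_injOn_of_card_le _ (fun _ _ => mem_coe.mpr (mem_univ _)) hinj
    (by simp) (mem_univ c)
  refine le_antisymm (card_le_one.mpr fun a ha b hb => ?_)
    (card_pos.mpr ⟨q, mem_filter.mpr ⟨hq, hqc⟩⟩)
  rw [mem_filter] at ha hb
  exact hinj ha.1 hb.1 (ha.2.trans hb.2.symm)

theorem card_filter_range_mul_div (P : ℕ → Prop) [DecidablePred P] (a b : ℕ) :
    #{k ∈ range (a * b) | P (k / b)} = #{q ∈ range a | P q} * b := by
  rw [show #{q ∈ range a | P q} * b = #({q ∈ range a | P q} ×ˢ range b) by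
    rw [card_product, card_range]]
  have hdiv {x y : ℕ} (hy : y < b) : (x * b + y) / b = x := by
    rw [add_comm, Nat.add_mul_div_right _ _ (y.zero_le.trans_lt hy), Nat.div_eq_of_lt hy, zero_add]
  refine card_nbij' (fun k => (k / b, k % b)) (fun x => x.1 * b + x.2) ?_ ?_ ?_ ?_
  · intro k hk
    simp only [coe_filter, coe_product, coe_range, mem_range, Set.mem_ofPred_eq, Set.mem_prod,
      Set.mem_Iio] at hk ⊢
    have hb : 0 < b := Nat.pos_of_mul_pos_left (k.zero_le.trans_lt hk.1)
    exact ⟨⟨Nat.div_lt_of_lt_mul (by rw [mul_comm]; exact hk.1), hk.2⟩, Nat.mod_lt _ hb⟩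
  · rintro ⟨x, y⟩ hxy
    simp only [coe_filter, coe_product, coe_range, mem_range, Set.mem_ofPred_eq, Set.mem_prod,
      Set.mem_Iio] at hxy ⊢
    obtain ⟨⟨hx, hP⟩, hy⟩ := hxy
    exact ⟨by nlinarith, by rwa [hdiv hy]⟩
  · intro k _
    exact Nat.div_add_mod' k b
  · rintro ⟨x, y⟩ hxy
    simp only [coe_product, coe_range, Set.mem_prod, Set.mem_Iio] at hxy
    change ((x * b + y) / b, (x * b + y) % b) = (x, y)
    rw [hdiv hxy.2, add_comm, Nat.add_mul_mod_self_right, Nat.mod_eq_of_lt hxy.2]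

theorem sum_digits_eq_weightedDigitReversal (p m e k : ℕ) (Φ : ℕ → ℤ)
    (hΦ0 : ∀ j ≤ m, Φ j = 0) :
    ∑ j ∈ Icc 1 (m + e), ((k / p ^ (j - 1) % p : ℕ) : ℤ) * Φ j * (p : ℤ) ^ (m + e - j) =
      weightedDigitReversal p (fun i => Φ (m + 1 + i)) e (k / p ^ m) := by
  rw [← Ico_add_one_right_eq_Icc, sum_Ico_eq_sum_range, Nat.add_sub_cancel, sum_range_add,
    sum_eq_zero fun j hj => by rw [hΦ0 _ (by rw [mem_range] at hj; omega), mul_zero, zero_mul],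
    zero_add, weightedDigitReversal]
  refine sum_congr rfl fun i hi => ?_
  have hi : i < e := mem_range.mp hi
  rw [show 1 + (m + i) - 1 = m + i by omega, show 1 + (m + i) = m + 1 + i by omega,
    show m + e - (m + 1 + i) = e - 1 - i by omega, pow_add, Nat.div_div_eq_div_mul]

theorem digit_sums_complete_residue_system_general
    (p n e : ℕ) (hp : p.Prime) (hen : e ≤ n)
    (Φ : ℕ → ℤ)
    (hΦ0 : ∀ j, j ≤ n - e → Φ j = 0)
    (hΦcop : ∀ j, n - e < j → j ≤ n → IsCoprime (Φ j) (p : ℤ)) :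
    ∀ c : ZMod (p ^ e),
      ((Finset.range (p ^ n)).filter (fun k =>
        ((∑ j ∈ Finset.Icc 1 n, (((k / p ^ (j - 1)) % p : ℕ) : ℤ) * Φ j * (p : ℤ) ^ (n - j)
          : ℤ) : ZMod (p ^ e)) = c)).card = p ^ (n - e) := by
  intro c
  obtain ⟨m, rfl⟩ := Nat.exists_eq_add_of_le' hen
  rw [Nat.add_sub_cancel] at hΦ0 hΦcop ⊢
  have hu : ∀ i < e, IsCoprime (Φ (m + 1 + i)) p := fun i hi => hΦcop _ (by omega) (by omega)
  simp only [sum_digits_eq_weightedDigitReversal p m e _ Φ hΦ0]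
  rw [pow_add, mul_comm, card_filter_range_mul_div
    (fun q => (weightedDigitReversal p (fun i => Φ (m + 1 + i)) e q : ZMod (p ^ e)) = c),
    card_filter_weightedDigitReversal_eq hp.pos hu, one_mul]

/-- As `k` ranges over `0, ..., p^n - 1` with `p`-adic digits `a_j^(k)`, the integers
`Σ_{j=1}^n a_j^(k) Φ_j p^(n-j)` run through a complete residue system modulo `p^e`,
each residue occurring exactly `p^(n-e)` times, provided `Φ_j = 0` for `j ≤ n - e` and
`gcd(Φ_j, p) = 1` for `n - e < j ≤ n`. -/
theorem digit_sums_complete_residue_system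
    (p n e : ℕ) (hp : p.Prime) (hn : 1 ≤ n) (he : 1 ≤ e) (hen : e ≤ n)
    (Φ : ℕ → ℤ)
    (hΦ0 : ∀ j, j ≤ n - e → Φ j = 0)
    (hΦcop : ∀ j, n - e < j → j ≤ n → IsCoprime (Φ j) (p : ℤ)) :
    ∀ c : ZMod (p ^ e),
      ((Finset.range (p ^ n)).filter (fun k =>
        ((∑ j ∈ Finset.Icc 1 n, (((k / p ^ (j - 1)) % p : ℕ) : ℤ) * Φ j * (p : ℤ) ^ (n - j)
          : ℤ) : ZMod (p ^ e)) = c)).card = p ^ (n - e) :=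
  digit_sums_complete_residue_system_general p n e hp hen Φ hΦ0 hΦcop
end

section
/- Let p be prime, n ≥ 1, 1 ≤ e ≤ n, m ≥ 1, and let δ, Φ_1, ..., Φ_n be integers with Φ_j = 0 for j ≤ n-e, gcd(Φ_j, p) = 1 for j > n-e, and δ = (p-1) Σ_{j=1}^n Φ_j p^{n-j} + (p^e - 1). Then Σ_{k=0}^{p^n - 1} ⌊(m δ - Σ_{j=1}^n a_j^{(k)} Φ_j p^{n-j}) / p^e⌋ = (2m-1) p^{n-e} δ / 2, where a_j^{(k)} are the p-adic digits of k. -/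
/-!
Since `⌊x / p^e⌋ = (x - x % p^e) / p^e`, the sum splits into a sum of numerators and a sum of
residues. Every digit takes each value `0, …, p-1` equally often, which evaluates the first sum.
The summand only depends on the top `e` digits of `k`, and these are recovered from
`Σ_j a_j Φ_j p^(n-j)` modulo `p^e` one at a time, the most significant first, because the `Φ_j`
are units modulo `p`. Hence the residues run through `0, …, p^e - 1`, each `p^(n-e)` times.
-/

open Finset

namespace Finset

variable {M : Type*} [AddCommMonoid M]

theorem sum_range_mul_eq_sum_sum (a b : ℕ) (f : ℕ → M) :
    ∑ k ∈ range (a * b), f k = ∑ i ∈ range b, ∑ r ∈ range a, f (a * i + r) := by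
  induction b with
  | zero => simp
  | succ b ih =>
    rw [Nat.mul_succ, sum_range_add, ih, sum_range_succ]

theorem sum_range_mul_div (a b : ℕ) (f : ℕ → M) :
    ∑ k ∈ range (a * b), f (k / a) = a • ∑ i ∈ range b, f i := by
  rw [sum_range_mul_eq_sum_sum, smul_sum]
  refine sum_congr rfl fun i _ => ?_
  rw [sum_eq_card_nsmul fun r hr => ?_, card_range]
  rw [Nat.mul_add_div (by grind), Nat.div_eq_of_lt (mem_range.mp hr), add_zero]

theorem sum_range_mul_mod (a b : ℕ) (f : ℕ → M) :
    ∑ k ∈ range (a * b), f (k % a) = b • ∑ r ∈ range a, f r := by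
  rw [sum_range_mul_eq_sum_sum, sum_eq_card_nsmul fun i _ => sum_congr rfl fun r hr => ?_,
    card_range]
  rw [Nat.mul_add_mod, Nat.mod_eq_of_lt (mem_range.mp hr)]

end Finset

theorem two_mul_sum_range_intCast (q : ℕ) : 2 * ∑ r ∈ range q, (r : ℤ) = q * (q - 1) := by
  induction q with
  | zero => simp
  | succ q ih => rw [sum_range_succ, mul_add, ih]; push_cast; ring

theorem two_mul_sum_digit {p n i : ℕ} (hi : i < n) :
    2 * ∑ k ∈ range (p ^ n), ((k / p ^ i % p : ℕ) : ℤ) = p ^ n * (p - 1) := by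
  have hpow : p ^ n = p ^ i * (p * p ^ (n - i - 1)) := by
    rw [← pow_succ', ← pow_add]; congr 1; omega
  rw [← Nat.cast_pow, hpow, sum_range_mul_div _ _ fun q => ((q % p : ℕ) : ℤ),
    sum_range_mul_mod _ _ fun r => (r : ℤ), nsmul_eq_mul, nsmul_eq_mul, mul_left_comm,
    mul_left_comm 2, two_mul_sum_range_intCast]
  push_cast; ring

def weightedDigitSum (p : ℕ) (Φ : ℕ → ℤ) (n k : ℕ) : ℤ :=
  ∑ j ∈ Icc 1 n, ((k / p ^ (j - 1) % p : ℕ) : ℤ) * Φ j * (p : ℤ) ^ (n - j)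

namespace weightedDigitSum

variable {p : ℕ} {Φ : ℕ → ℤ}

theorem zero_right (k : ℕ) : weightedDigitSum p Φ 0 k = 0 := by
  simp [weightedDigitSum]

theorem succ (n k : ℕ) :
    weightedDigitSum p Φ (n + 1) k =
      p * weightedDigitSum p Φ n k + ((k / p ^ n % p : ℕ) : ℤ) * Φ (n + 1) := by
  rw [weightedDigitSum, sum_Icc_succ_top (by omega), weightedDigitSum, mul_sum]
  congr 1
  · refine sum_congr rfl fun j hj => ?_
    rw [show n + 1 - j = n - j + 1 by grind, pow_succ]
    ring
  · simp

theorem mod_pow (n k : ℕ) : weightedDigitSum p Φ n (k % p ^ n) = weightedDigitSum p Φ n k := by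
  refine sum_congr rfl fun j hj => ?_
  have hj : j - 1 + 1 ≤ n := by grind
  rw [← Nat.mod_mul_right_div_self, ← pow_succ, Nat.mod_mod_of_dvd _ (pow_dvd_pow p hj),
    pow_succ, Nat.mod_mul_right_div_self]

theorem add_of_eq_zero {c : ℕ} (hΦ : ∀ j ≤ c, Φ j = 0) (e k : ℕ) :
    weightedDigitSum p Φ (c + e) k = weightedDigitSum p (fun j => Φ (c + j)) e (k / p ^ c) := by
  induction e with
  | zero =>
    rw [zero_right, add_zero]
    exact sum_eq_zero fun j hj => by rw [hΦ j (mem_Icc.mp hj).2, mul_zero, zero_mul]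
  | succ e ih =>
    rw [← add_assoc, succ, succ, ih, Nat.div_div_eq_div_mul, ← pow_add, add_assoc]

theorem two_mul_sum_range (n : ℕ) :
    2 * ∑ k ∈ range (p ^ n), weightedDigitSum p Φ n k =
      p ^ n * (p - 1) * ∑ j ∈ Icc 1 n, Φ j * (p : ℤ) ^ (n - j) := by
  simp only [weightedDigitSum]
  rw [sum_comm, mul_sum, mul_sum]
  refine sum_congr rfl fun j hj => ?_
  rw [← sum_mul, ← sum_mul, ← mul_assoc, ← mul_assoc, two_mul_sum_digit (by grind),
    mul_assoc]

theorem eq_of_modEq {d : ℕ} (hΦ : ∀ j, 1 ≤ j → j ≤ d → IsCoprime (Φ j) p) {t t' : ℕ}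
    (ht : t < p ^ d) (ht' : t' < p ^ d)
    (h : weightedDigitSum p Φ d t ≡ weightedDigitSum p Φ d t' [ZMOD p ^ d]) : t = t' := by
  induction d generalizing t t' with
  | zero => simp_all
  | succ d ih =>
    have hp : 0 < p := Nat.pos_of_ne_zero (by rintro rfl; simp at ht)
    have hlt : t / p ^ d < p := Nat.div_lt_of_lt_mul (by rwa [← pow_succ])
    have hlt' : t' / p ^ d < p := Nat.div_lt_of_lt_mul (by rwa [← pow_succ])
    rw [succ, succ, Nat.mod_eq_of_lt hlt, Nat.mod_eq_of_lt hlt', pow_succ'] at h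
    have htop : t / p ^ d = t' / p ^ d := by
      have hmodp := h.of_mul_right (p ^ d)
      simp only [Int.ModEq, Int.mul_add_emod_self_left] at hmodp
      have := Int.ModEq.cancel_right_div_gcd (by exact_mod_cast hp) hmodp
      rw [Int.isCoprime_iff_gcd_eq_one.mp (hΦ (d + 1) (by omega) le_rfl).symm, Nat.cast_one,
        Int.ediv_one, Int.natCast_modEq_iff] at this
      exact this.eq_of_lt_of_lt hlt hlt'
    have hlow : t % p ^ d = t' % p ^ d := by
      refine ih (fun j hj hjd => hΦ j hj (by omega)) (Nat.mod_lt _ (by positivity))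
        (Nat.mod_lt _ (by positivity)) ?_
      rw [mod_pow, mod_pow]
      rw [htop] at h
      exact Int.ModEq.mul_left_cancel' (by exact_mod_cast hp.ne') (h.add_right_cancel' _)
    rw [← Nat.div_add_mod t (p ^ d), ← Nat.div_add_mod t' (p ^ d), htop, hlow]

end weightedDigitSum

theorem sum_range_emod_eq_sum_range {N : ℕ} {f : ℕ → ℤ}
    (hf : ∀ t < N, ∀ t' < N, f t ≡ f t' [ZMOD N] → t = t') :
    ∑ t ∈ range N, f t % N = ∑ v ∈ range N, (v : ℤ) := by
  have hnonneg : ∀ t ∈ range N, 0 ≤ f t % N := fun t ht =>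
    Int.emod_nonneg _ (by have := mem_range.mp ht; omega)
  have hmaps : ∀ t ∈ range N, (f t % N).toNat ∈ range N := fun t ht => by
    have := Int.emod_lt_of_pos (f t) (by have := mem_range.mp ht; omega : (0 : ℤ) < N)
    have := hnonneg t ht
    rw [mem_range]; omega
  have hinj : Set.InjOn (fun t => (f t % N).toNat) (range N) := fun t ht t' ht' htt' => by
    have := congrArg ((↑) : ℕ → ℤ) htt'
    simp only [Int.toNat_of_nonneg (hnonneg t ht), Int.toNat_of_nonneg (hnonneg t' ht')] at this
    exact hf t (mem_range.mp ht) t' (mem_range.mp ht') this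
  exact sum_nbij _ hmaps hinj (surjOn_of_injOn_of_card_le _ hmaps hinj le_rfl)
    fun t ht => (Int.toNat_of_nonneg (hnonneg t ht)).symm

theorem sum_nu_ik_eq_general
    (p n e m : ℕ) (hp : p.Prime) (hen : e ≤ n)
    (Φ : ℕ → ℤ) (δ : ℤ)
    (hΦ0 : ∀ j, j ≤ n - e → Φ j = 0)
    (hΦcop : ∀ j, n - e < j → j ≤ n → IsCoprime (Φ j) (p : ℤ))
    (hδ : δ = ((p : ℤ) - 1) * ∑ j ∈ Finset.Icc 1 n, Φ j * (p : ℤ) ^ (n - j)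
        + ((p : ℤ) ^ e - 1)) :
    2 * ∑ k ∈ Finset.range (p ^ n),
        ⌊(((m : ℤ) * δ -
            ∑ j ∈ Finset.Icc 1 n, (((k / p ^ (j - 1)) % p : ℕ) : ℤ) * Φ j * (p : ℤ) ^ (n - j)
            : ℤ) : ℚ) / (p : ℚ) ^ e⌋
      = (2 * (m : ℤ) - 1) * (p : ℤ) ^ (n - e) * δ := by
  have hN : 0 < p ^ e := pow_pos hp.pos e
  have hpow : p ^ n = p ^ (n - e) * p ^ e := by rw [← pow_add, Nat.sub_add_cancel hen]
  set x : ℕ → ℤ := fun k => m * δ - weightedDigitSum p Φ n k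
  have hnum : 2 * ∑ k ∈ range (p ^ n), x k = p ^ n * ((2 * m - 1) * δ + p ^ e - 1) := by
    rw [sum_sub_distrib, mul_sub, weightedDigitSum.two_mul_sum_range, sum_const, card_range,
      nsmul_eq_mul, hδ]
    push_cast
    ring
  have hres : ∑ k ∈ range (p ^ n), x k % (p ^ e : ℕ) =
      p ^ (n - e) * ∑ v ∈ range (p ^ e), (v : ℤ) := by
    have htop (k : ℕ) : weightedDigitSum p Φ n k =
        weightedDigitSum p (fun j => Φ (n - e + j)) e (k / p ^ (n - e)) := by
      conv_lhs => rw [← Nat.sub_add_cancel hen]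
      exact weightedDigitSum.add_of_eq_zero hΦ0 e k
    simp only [x, htop]
    rw [hpow, sum_range_mul_div _ _ fun t => (m * δ - weightedDigitSum p _ e t) % (p ^ e : ℕ),
      sum_range_emod_eq_sum_range, nsmul_eq_mul, Nat.cast_pow]
    intro t ht t' ht' h
    refine weightedDigitSum.eq_of_modEq (fun j hj hje => hΦcop (n - e + j) (by omega) (by omega))
      ht ht' ?_
    simpa using h.sub_left (m * δ)
  have hdiv : ∑ k ∈ range (p ^ n), x k % (p ^ e : ℕ) +
      (p ^ e : ℕ) * ∑ k ∈ range (p ^ n), x k / (p ^ e : ℕ) =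
      ∑ k ∈ range (p ^ n), x k := by
    rw [mul_sum, ← sum_add_distrib]
    exact sum_congr rfl fun k _ => Int.emod_add_mul_ediv _ _
  rw [← Nat.cast_pow]
  simp only [Rat.floor_intCast_div_natCast]
  change 2 * ∑ k ∈ range (p ^ n), x k / (p ^ e : ℕ) = _
  apply mul_left_cancel₀ (Nat.cast_ne_zero.mpr hN.ne')
  have hgauss := two_mul_sum_range_intCast (p ^ e)
  have hpowZ : (p : ℤ) ^ n = p ^ (n - e) * p ^ e := by exact_mod_cast hpow
  push_cast at hres hdiv hgauss ⊢
  linear_combination 2 * hdiv + hnum - 2 * hres - (p : ℤ) ^ (n - e) * hgauss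
    + ((2 * m - 1) * δ + p ^ e - 1) * hpowZ

/-- With `δ = (p-1) Σ_{j=1}^n Φ_j p^(n-j) + (p^e - 1)`, `Φ_j = 0` for `j ≤ n-e` and
`gcd(Φ_j, p) = 1` for `n-e < j ≤ n`, one has
`Σ_{k=0}^{p^n-1} ⌊(mδ - Σ_j a_j^(k) Φ_j p^(n-j)) / p^e⌋ = (2m-1) p^(n-e) δ / 2`,
stated here with both sides multiplied by `2`. -/
theorem sum_nu_ik_eq
    (p n e m : ℕ) (hp : p.Prime) (hn : 1 ≤ n) (he : 1 ≤ e) (hen : e ≤ n) (hm : 1 ≤ m)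
    (Φ : ℕ → ℤ) (δ : ℤ)
    (hΦ0 : ∀ j, j ≤ n - e → Φ j = 0)
    (hΦcop : ∀ j, n - e < j → j ≤ n → IsCoprime (Φ j) (p : ℤ))
    (hδ : δ = ((p : ℤ) - 1) * ∑ j ∈ Finset.Icc 1 n, Φ j * (p : ℤ) ^ (n - j)
        + ((p : ℤ) ^ e - 1)) :
    2 * ∑ k ∈ Finset.range (p ^ n),
        ⌊(((m : ℤ) * δ -
            ∑ j ∈ Finset.Icc 1 n, (((k / p ^ (j - 1)) % p : ℕ) : ℤ) * Φ j * (p : ℤ) ^ (n - j)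
            : ℤ) : ℚ) / (p : ℚ) ^ e⌋
      = (2 * (m : ℤ) - 1) * (p : ℤ) ^ (n - e) * δ :=
  sum_nu_ik_eq_general p n e m hp hen Φ δ hΦ0 hΦcop hδ
end

section
/- With notation as in the elementary abelian setting (q = p^n, ramification invariants Φ(1), ..., Φ(r) coprime to p, m ≥ 1), the Boseck invariants Γ_k(m) = Σ_{i=1}^r ⌊(m(p^n−1)(Φ(i)+1) − kΦ(i))/p^n⌋ satisfy (2/(2m−1)) Σ_{k=0}^{p^n−1} Γ_k(m) = Σ_{i=1}^r (p^n − 1)(Φ(i) + 1), i.e. twice the sum of all Boseck invariants divided by 2m−1 equals the degree of the different. -/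
/-!
Fix a ramified place, put `q = p^n`, `c = Φ(i)` and `A = m(q-1)(c+1)`. As `c` is a unit mod `q`,
the residues of `A - kc` for `k = 0, …, q-1` run once over `0, …, q-1`. Summing
`q ⌊(A - kc)/q⌋ = (A - kc) - ((A - kc) mod q)` over `k` therefore gives
`2 Σ_k ⌊(A - kc)/q⌋ = 2A - (q-1)(c+1) = (2m-1)(q-1)(c+1)`, and summing over the places gives
the theorem.
-/

open Finset

theorem two_mul_sum_range_natCast {R : Type*} [CommRing R] (q : ℕ) :
    2 * ∑ k ∈ range q, (k : R) = q * (q - 1) := by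
  induction q with
  | zero => simp
  | succ q ih => rw [sum_range_succ, mul_add, ih]; push_cast; ring

theorem sum_range_eq_sum_zmod_val {M : Type*} [AddCommMonoid M] (q : ℕ) [NeZero q]
    (f : ℕ → M) : ∑ k ∈ range q, f k = ∑ x : ZMod q, f x.val :=
  sum_nbij' (fun k => (k : ZMod q)) ZMod.val (fun _ _ => mem_univ _)
    (fun x _ => mem_range.2 x.val_lt) (fun _ hk => ZMod.val_cast_of_lt (mem_range.1 hk))
    (fun x _ => ZMod.natCast_zmod_val x) (fun _ hk => by rw [ZMod.val_cast_of_lt (mem_range.1 hk)])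

theorem sum_range_sub_mul_emod {q c : ℕ} [NeZero q] (hc : c.Coprime q) (A : ℤ) :
    ∑ k ∈ range q, (A - k * c) % q = ∑ k ∈ range q, (k : ℤ) := by
  let σ : ZMod q ≃ ZMod q := (ZMod.unitOfCoprime c hc).mulRight.trans (Equiv.subLeft (A : ZMod q))
  calc ∑ k ∈ range q, (A - k * c) % q
      = ∑ x : ZMod q, ((σ x).val : ℤ) := by
        rw [sum_range_eq_sum_zmod_val q]
        refine sum_congr rfl fun x _ => ?_
        rw [← ZMod.val_intCast]
        simp [σ, ZMod.coe_unitOfCoprime]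
    _ = ∑ k ∈ range q, (k : ℤ) := by
        rw [Equiv.sum_comp σ fun y => (y.val : ℤ), sum_range_eq_sum_zmod_val q]

theorem two_mul_sum_range_sub_mul_ediv {q c : ℕ} [NeZero q] (hc : c.Coprime q) (A : ℤ) :
    2 * ∑ k ∈ range q, (A - k * c) / q = 2 * A - (q - 1) * (c + 1) := by
  have hdiv (a : ℤ) : q * (a / q) = a - a % q := by rw [Int.emod_def]; ring
  refine mul_left_cancel₀ (Nat.cast_ne_zero.2 (NeZero.ne q) : (q : ℤ) ≠ 0) ?_
  calc (q : ℤ) * (2 * ∑ k ∈ range q, (A - k * c) / q)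
      = 2 * (∑ k ∈ range q, (A - k * c) - ∑ k ∈ range q, (A - k * c) % q) := by
        rw [mul_left_comm, mul_sum, ← sum_sub_distrib]
        simp_rw [hdiv]
    _ = 2 * (q * A - (c + 1) * ∑ k ∈ range q, (k : ℤ)) := by
        rw [sum_range_sub_mul_emod hc, sum_sub_distrib, sum_const, card_range, nsmul_eq_mul,
          ← sum_mul]
        ring
    _ = q * (2 * A - (q - 1) * (c + 1)) := by
        linear_combination (-(c + 1 : ℤ)) * two_mul_sum_range_natCast (R := ℤ) q

theorem boseck_sum_eq_deg_different_general
    (p n r m : ℕ) (hp : p.Prime)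
    (Φ : Fin r → ℕ) (hΦcop : ∀ i, Nat.Coprime (Φ i) p) :
    2 * ∑ k ∈ Finset.range (p ^ n), ∑ i,
        ⌊(((m : ℤ) * ((p : ℤ) ^ n - 1) * ((Φ i : ℤ) + 1) - (k : ℤ) * (Φ i : ℤ) : ℤ) : ℚ)
          / (p : ℚ) ^ n⌋
      = (2 * (m : ℤ) - 1) * ∑ i, ((p : ℤ) ^ n - 1) * ((Φ i : ℤ) + 1) := by
  have : NeZero (p ^ n) := ⟨pow_ne_zero n hp.ne_zero⟩
  rw [sum_comm, mul_sum, mul_sum]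
  refine sum_congr rfl fun i _ => ?_
  have hfloor (a : ℤ) : ⌊(a : ℚ) / (p : ℚ) ^ n⌋ = a / ((p ^ n : ℕ) : ℤ) := by
    rw [← Rat.floor_intCast_div_natCast]; push_cast; rfl
  simp_rw [hfloor]
  rw [two_mul_sum_range_sub_mul_ediv ((hΦcop i).pow_right n)]
  push_cast
  ring

/-- Boseck invariants in the elementary abelian setting:
`Γ_k(m) = Σ_{i=1}^r ⌊(m(p^n-1)(Φ(i)+1) - kΦ(i))/p^n⌋` satisfy
`(2/(2m-1)) Σ_{k=0}^{p^n-1} Γ_k(m) = Σ_{i=1}^r (p^n-1)(Φ(i)+1) = deg Diff(F/K(x))`,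
stated here with both sides multiplied by `2m-1`. -/
theorem boseck_sum_eq_deg_different
    (p n r m : ℕ) (hp : p.Prime) (hn : 1 ≤ n) (hr : 1 ≤ r) (hm : 1 ≤ m)
    (Φ : Fin r → ℕ) (hΦpos : ∀ i, 1 ≤ Φ i) (hΦcop : ∀ i, Nat.Coprime (Φ i) p) :
    2 * ∑ k ∈ Finset.range (p ^ n), ∑ i,
        ⌊(((m : ℤ) * ((p : ℤ) ^ n - 1) * ((Φ i : ℤ) + 1) - (k : ℤ) * (Φ i : ℤ) : ℤ) : ℚ)
          / (p : ℚ) ^ n⌋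
      = (2 * (m : ℤ) - 1) * ∑ i, ((p : ℤ) ^ n - 1) * ((Φ i : ℤ) + 1) :=
  boseck_sum_eq_deg_different_general p n r m hp Φ hΦcop
end

section
/- In the elementary abelian setting with m ≥ 2, Σ_{k=0}^{p^n − 1}(Γ_k(m) − 2m + 1) = (2m − 1)(g_F − 1), where Γ_k(m) and g_F are as defined. Hence the proposed set of m-differentials x^ν y^k g_k(x)^{-1} (dx)^{⊗m} with 0 ≤ ν ≤ Γ_k(m) − 2m has the right cardinality to be a basis of Ω_F(m). -/
/-! For `b` coprime to `q`, the residues of `a - k * b` modulo `q` run through `0, …, q - 1`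
as `k` does, so `∑_{k < q} ⌊(a - k b) / q⌋ = (∑ (a - k b) - ∑ j) / q = a - (b + 1)(q - 1) / 2`.
Taking `q = p ^ n`, `b = Φ i` and `a = m (p ^ n - 1)(Φ i + 1)` and summing over `i` gives
`∑_k Γ_k(m) = (2m - 1)(p ^ n - 1)/2 · ∑_i (Φ i + 1)`, which is the claim after subtracting
`p ^ n (2m - 1)`. -/

open Finset

namespace Int

variable {q : ℕ} {b : ℤ}

lemma injOn_emod_sub_mul (hb : IsCoprime (q : ℤ) b) (a : ℤ) :
    Set.InjOn (fun k : ℕ => (a - k * b) % q) (Finset.range q) := by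
  intro k hk k' hk' hkk'
  simp only [coe_range, Set.mem_Iio] at hk hk'
  have hdvd : (q : ℤ) ∣ (k - k') * b := by
    convert Int.ModEq.dvd hkk' using 1
    ring
  have := eq_zero_of_abs_lt_dvd (hb.dvd_of_dvd_mul_right hdvd) (by rw [abs_lt]; omega)
  omega

lemma sum_range_emod_sub_mul (hb : IsCoprime (q : ℤ) b) (a : ℤ) :
    ∑ k ∈ Finset.range q, (a - k * b) % q = ∑ j ∈ Finset.range q, (j : ℤ) := by
  rcases Nat.eq_zero_or_pos q with rfl | hq
  · simp
  have hnonneg (k : ℕ) : 0 ≤ (a - k * b) % q := emod_nonneg _ (by omega)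
  have hlt (k : ℕ) : (a - k * b) % q < q := emod_lt_of_pos _ (by omega)
  have hmaps :
      Set.MapsTo (fun k : ℕ => ((a - k * b) % q).toNat) (Finset.range q) (Finset.range q) := by
    intro k _
    simp only [coe_range, Set.mem_Iio]
    have := hlt k
    omega
  have hinj : Set.InjOn (fun k : ℕ => ((a - k * b) % q).toNat) (Finset.range q) := by
    intro k hk k' hk' hkk'
    have := hnonneg k
    have := hnonneg k'
    exact injOn_emod_sub_mul hb a hk hk' (by simp only at hkk' ⊢; omega)
  refine sum_nbij _ hmaps hinj (surjOn_of_injOn_of_card_le _ hmaps hinj le_rfl) fun k _ => ?_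
  exact (toNat_of_nonneg (hnonneg k)).symm

lemma two_mul_sum_range_sub_mul_ediv (hq : 0 < q) (hb : IsCoprime (q : ℤ) b) (a : ℤ) :
    2 * ∑ k ∈ Finset.range q, (a - k * b) / q = 2 * a - (b + 1) * (q - 1) := by
  have hgauss : 2 * ∑ k ∈ Finset.range q, (k : ℤ) = q * (q - 1) := by
    have := Finset.sum_range_id_mul_two q
    zify [hq] at this
    linarith
  have hdiv : q * ∑ k ∈ Finset.range q, (a - k * b) / q
      = ∑ k ∈ Finset.range q, (a - k * b) - ∑ k ∈ Finset.range q, (a - k * b) % q := by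
    rw [mul_sum, ← sum_sub_distrib]
    refine sum_congr rfl fun k _ => ?_
    linarith [mul_ediv_add_emod (a - k * b) q]
  rw [sum_range_emod_sub_mul hb, sum_sub_distrib, ← sum_mul, sum_const, card_range,
    nsmul_eq_mul] at hdiv
  refine mul_left_cancel₀ (show (q : ℤ) ≠ 0 by omega) ?_
  linear_combination 2 * hdiv - (b + 1) * hgauss

end Int

lemma sum_range_floor_intCast_sub_mul_div {q : ℕ} (hq : 0 < q) {b : ℤ}
    (hb : IsCoprime (q : ℤ) b) (a : ℤ) :
    ∑ k ∈ range q, (⌊((a - k * b : ℤ) : ℚ) / q⌋ : ℚ) = a - (b + 1) * (q - 1) / 2 := by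
  simp_rw [Rat.floor_intCast_div_natCast]
  have := congrArg (Int.cast : ℤ → ℚ) (Int.two_mul_sum_range_sub_mul_ediv hq hb a)
  push_cast at this ⊢
  linarith

theorem boseck_basis_cardinality_general
    (p n r m : ℕ) (hp : p.Prime)
    (Φ : Fin r → ℕ) (hΦcop : ∀ i, Nat.Coprime (Φ i) p)
    (gF : ℚ)
    (hgF : gF = (((p : ℚ) ^ n - 1) / 2) * (-2 + ∑ i, ((Φ i : ℚ) + 1))) :
    ∑ k ∈ Finset.range (p ^ n),
        ((∑ i, (⌊(((m : ℤ) * ((p : ℤ) ^ n - 1) * ((Φ i : ℤ) + 1) - (k : ℤ) * (Φ i : ℤ)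
            : ℤ) : ℚ) / (p : ℚ) ^ n⌋ : ℚ)) - 2 * (m : ℚ) + 1)
      = (2 * (m : ℚ) - 1) * (gF - 1) := by
  have hq : 0 < p ^ n := pow_pos hp.pos n
  have hfloor (i : Fin r) :
      ∑ k ∈ range (p ^ n), (⌊(((m : ℤ) * ((p : ℤ) ^ n - 1) * ((Φ i : ℤ) + 1)
          - (k : ℤ) * (Φ i : ℤ) : ℤ) : ℚ) / (p : ℚ) ^ n⌋ : ℚ)
        = (2 * m - 1) * ((p : ℚ) ^ n - 1) / 2 * ((Φ i : ℚ) + 1) := by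
    have hcop : IsCoprime ((p ^ n : ℕ) : ℤ) (Φ i) :=
      Nat.isCoprime_iff_coprime.mpr ((hΦcop i).symm.pow_left n)
    have := sum_range_floor_intCast_sub_mul_div hq hcop (m * ((p : ℤ) ^ n - 1) * (Φ i + 1))
    push_cast at this ⊢
    rw [this]
    ring
  rw [sum_add_distrib, sum_sub_distrib, sum_comm, sum_congr rfl fun i _ => hfloor i, ← mul_sum,
    sum_const, sum_const, card_range, nsmul_eq_mul, nsmul_eq_mul, hgF]
  push_cast
  ring

/-- In the elementary abelian setting with `m ≥ 2`:
`Σ_{k=0}^{p^n-1} (Γ_k(m) - 2m + 1) = (2m-1)(g_F - 1)`, so the proposed basis of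
`Ω_F(m)` has the right cardinality `dim_K Ω_F(m) = (2m-1)(g_F - 1)`. -/
theorem boseck_basis_cardinality
    (p n r m : ℕ) (hp : p.Prime) (hn : 1 ≤ n) (hr : 1 ≤ r) (hm : 2 ≤ m)
    (Φ : Fin r → ℕ) (hΦpos : ∀ i, 1 ≤ Φ i) (hΦcop : ∀ i, Nat.Coprime (Φ i) p)
    (gF : ℚ)
    (hgF : gF = (((p : ℚ) ^ n - 1) / 2) * (-2 + ∑ i, ((Φ i : ℚ) + 1))) :
    ∑ k ∈ Finset.range (p ^ n),
        ((∑ i, (⌊(((m : ℤ) * ((p : ℤ) ^ n - 1) * ((Φ i : ℤ) + 1) - (k : ℤ) * (Φ i : ℤ)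
            : ℤ) : ℚ) / (p : ℚ) ^ n⌋ : ℚ)) - 2 * (m : ℚ) + 1)
      = (2 * (m : ℚ) - 1) * (gF - 1) :=
  boseck_basis_cardinality_general p n r m hp Φ hΦcop gF hgF
end

section
/- Let m = 1 in the elementary abelian setting. Then Γ_k(1) = Σ_{i=1}^r ⌊((p^n − 1)(Φ(i) + 1) − kΦ(i))/p^n⌋ = 0 if and only if k = p^n − 1; moreover for m ≥ 2, Γ_k(m) > 0 for every 0 ≤ k ≤ p^n − 1. -/
lemma aux_floor_pos (a : ℤ) (q : ℕ) (hq : 0 < q) (h : (q : ℤ) ≤ a) :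
    1 ≤ ⌊(a : ℚ) / (q : ℚ)⌋ := by
  rw [Int.le_floor, le_div_iff₀ (by exact_mod_cast hq)]
  have : (q : ℚ) ≤ (a : ℚ) := by exact_mod_cast h
  push_cast
  linarith

lemma aux_floor_zero (a : ℤ) (q : ℕ) (hq : 0 < q) (h0 : 0 ≤ a) (h1 : a < (q : ℤ)) :
    ⌊(a : ℚ) / (q : ℚ)⌋ = 0 := by
  rw [Int.floor_eq_zero_iff, Set.mem_Ico]
  refine ⟨div_nonneg (by exact_mod_cast h0) (by positivity), ?_⟩
  rw [div_lt_one (by exact_mod_cast hq)]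
  exact_mod_cast h1

lemma aux_floor_nonneg (a : ℤ) (q : ℕ) (hq : 0 < q) (h0 : 0 ≤ a) :
    0 ≤ ⌊(a : ℚ) / (q : ℚ)⌋ :=
  Int.floor_nonneg.mpr (div_nonneg (by exact_mod_cast h0) (by positivity))

/-- In the elementary abelian setting, for `0 ≤ k ≤ p^n - 1`:
`Γ_k(1) = Σ_{i=1}^r ⌊((p^n-1)(Φ(i)+1) - kΦ(i))/p^n⌋ = 0` iff `k = p^n - 1`;
moreover for `m ≥ 2`, `Γ_k(m) > 0` for every such `k`. -/
theorem boseck_vanishing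
    (p n r : ℕ) (hp : p.Prime) (hn : 1 ≤ n) (hr : 1 ≤ r)
    (Φ : Fin r → ℕ) (hΦpos : ∀ i, 1 ≤ Φ i) (hΦcop : ∀ i, Nat.Coprime (Φ i) p) :
    (∀ k < p ^ n,
      ((∑ i, ⌊((((p : ℤ) ^ n - 1) * ((Φ i : ℤ) + 1) - (k : ℤ) * (Φ i : ℤ) : ℤ) : ℚ)
          / (p : ℚ) ^ n⌋) = 0 ↔ k = p ^ n - 1)) ∧
    (∀ m : ℕ, 2 ≤ m → ∀ k < p ^ n,
      0 < ∑ i, ⌊(((m : ℤ) * ((p : ℤ) ^ n - 1) * ((Φ i : ℤ) + 1) - (k : ℤ) * (Φ i : ℤ)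
          : ℤ) : ℚ) / (p : ℚ) ^ n⌋) := by
  have hq1 : 1 < p ^ n := Nat.one_lt_pow (by omega) hp.one_lt
  have hq0 : 0 < p ^ n := by omega
  have hqZ : (1 : ℤ) < (p : ℤ) ^ n := by exact_mod_cast hq1
  have hcast : (p : ℚ) ^ n = ((p ^ n : ℕ) : ℚ) := by push_cast; ring
  have hpZ : ((p ^ n : ℕ) : ℤ) = (p : ℤ) ^ n := by push_cast; ring
  haveI : Nonempty (Fin r) := ⟨⟨0, hr⟩⟩
  constructor
  · intro k hk
    have hkZ : (k : ℤ) ≤ (p : ℤ) ^ n - 1 := by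
      have : (k : ℤ) < ((p ^ n : ℕ) : ℤ) := by exact_mod_cast hk
      omega
    constructor
    · intro hsum
      by_contra hne
      have hklt : (k : ℤ) ≤ (p : ℤ) ^ n - 2 := by
        have h1 : (k : ℤ) < ((p ^ n : ℕ) : ℤ) := by exact_mod_cast hk
        have h2 : (k : ℤ) ≠ ((p ^ n : ℕ) : ℤ) - 1 := by
          intro h
          apply hne
          have : k = p ^ n - 1 := by omega
          exact this
        omega
      -- each term is nonnegative
      have hnonneg : ∀ i : Fin r, 0 ≤
          ⌊((((p : ℤ) ^ n - 1) * ((Φ i : ℤ) + 1) - (k : ℤ) * (Φ i : ℤ) : ℤ) : ℚ)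
            / (p : ℚ) ^ n⌋ := by
        intro i
        rw [hcast]
        apply aux_floor_nonneg _ _ hq0
        have hΦ : (1 : ℤ) ≤ (Φ i : ℤ) := by exact_mod_cast hΦpos i
        nlinarith
      have hall := (Finset.sum_eq_zero_iff_of_nonneg
        (fun i _ => hnonneg i)).mp hsum
      have hi0 := hall ⟨0, hr⟩ (Finset.mem_univ _)
      have hΦ : (1 : ℤ) ≤ (Φ ⟨0, hr⟩ : ℤ) := by exact_mod_cast hΦpos ⟨0, hr⟩
      have hge : ((p ^ n : ℕ) : ℤ) ≤
          ((p : ℤ) ^ n - 1) * ((Φ ⟨0, hr⟩ : ℤ) + 1) - (k : ℤ) * (Φ ⟨0, hr⟩ : ℤ) := by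
        rw [hpZ]; nlinarith
      have := aux_floor_pos _ _ hq0 hge
      rw [hcast] at hi0
      omega
    · intro hkeq
      apply Finset.sum_eq_zero
      intro i _
      rw [hcast]
      apply aux_floor_zero _ _ hq0
      · have hΦ : (1 : ℤ) ≤ (Φ i : ℤ) := by exact_mod_cast hΦpos i
        subst hkeq
        have : ((p ^ n - 1 : ℕ) : ℤ) = (p : ℤ) ^ n - 1 := by
          push_cast [Nat.cast_sub (le_of_lt hq1)]; ring
        rw [this]; nlinarith
      · subst hkeq
        have : ((p ^ n - 1 : ℕ) : ℤ) = (p : ℤ) ^ n - 1 := by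
          push_cast [Nat.cast_sub (le_of_lt hq1)]; ring
        rw [this, hpZ]; nlinarith
  · intro m hm k hk
    have hkZ : (k : ℤ) ≤ (p : ℤ) ^ n - 1 := by
      have : (k : ℤ) < ((p ^ n : ℕ) : ℤ) := by exact_mod_cast hk
      omega
    have hmZ : (2 : ℤ) ≤ (m : ℤ) := by exact_mod_cast hm
    apply Finset.sum_pos
    · intro i _
      have hΦ : (1 : ℤ) ≤ (Φ i : ℤ) := by exact_mod_cast hΦpos i
      have hge : ((p ^ n : ℕ) : ℤ) ≤
          (m : ℤ) * ((p : ℤ) ^ n - 1) * ((Φ i : ℤ) + 1) - (k : ℤ) * (Φ i : ℤ) := by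
        rw [hpZ]
        have h1 : 0 ≤ ((m : ℤ) - 2) * ((p : ℤ) ^ n - 1) * ((Φ i : ℤ) + 1) := by
          apply mul_nonneg (mul_nonneg (by linarith) (by linarith)) (by linarith)
        have h2 : 0 ≤ ((p : ℤ) ^ n - 1 - (k : ℤ)) * (Φ i : ℤ) :=
          mul_nonneg (by linarith) (by linarith)
        have h3 : 0 ≤ ((p : ℤ) ^ n - 1) * (Φ i : ℤ) :=
          mul_nonneg (by linarith) (by linarith)
        nlinarith [h1, h2, h3]
      have := aux_floor_pos _ _ hq0 hge
      rw [hcast]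
      omega
    · exact Finset.univ_nonempty
end

section
/- Let K be algebraically closed of characteristic p, q = p^n, and define the K[G]-module W_j = span_K(θ_0, ..., θ_{j-1}) for the additive group G = 𝔽_q acting by σ_a(θ_i) = Σ_{l=0}^{i} C(i,l) a^{i-l} θ_l. Then each W_j, 1 ≤ j ≤ p^n, is an indecomposable K[G]-module. -/
/-!
Identify `θ i` with `X ^ i`: then `σ_a` becomes the Taylor shift `P(X) ↦ P(X + ι a)` and `W_j` the
polynomials of degree `< j`. In a nonzero shift-stable subspace, a nonzero element `P` of minimal
degree is fixed by every shift, since `P(X + r) - P(X)` has smaller degree. Evaluating at `0` gives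
`P(ι a) = P(0)` at `p ^ n` distinct points, while `deg P < j ≤ p ^ n`, so `P` is a nonzero constant. Hence every
nonzero `G`-stable subspace of `W_j` contains `θ 0`, and two of them cannot meet trivially.
-/

open Polynomial

section TaylorStable

variable {R : Type*} [CommRing R] {K : Type*} [Field K] {G : Type*}

lemma taylor_mem_degreeLT {j : ℕ} {P : R[X]} (r : R) (hP : P ∈ degreeLT R j) :
    taylor r P ∈ degreeLT R j :=
  mem_degreeLT.mpr ((degree_taylor P r).trans_lt (mem_degreeLT.mp hP))

lemma exists_ne_zero_forall_taylor_eq (f : G → R) {U : Submodule R R[X]} (hU : U ≠ ⊥)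
    (hstab : ∀ a, ∀ P ∈ U, taylor (f a) P ∈ U) :
    ∃ P ∈ U, P ≠ 0 ∧ ∀ a, taylor (f a) P = P := by
  classical
  have hex : ∃ d, ∃ P ∈ U, P ≠ 0 ∧ P.natDegree = d :=
    let ⟨P, hPU, hP0⟩ := U.ne_bot_iff.mp hU
    ⟨_, P, hPU, hP0, rfl⟩
  obtain ⟨P, hPU, hP0, hPd⟩ := Nat.find_spec hex
  refine ⟨P, hPU, hP0, fun a => by_contra fun hne => ?_⟩
  have hdeg : (taylor (f a) P - P).degree < P.degree :=
    degree_sub_lt_right (degree_taylor P _) hP0 (leadingCoeff_taylor _ _)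
  refine Nat.find_min hex ?_ ⟨_, U.sub_mem (hstab a P hPU) hPU, sub_ne_zero.mpr hne, rfl⟩
  rw [← hPd]
  exact natDegree_lt_natDegree (sub_ne_zero.mpr hne) hdeg

lemma eq_C_of_forall_taylor_eq [IsDomain R] [Finite G] {f : G → R} (hf : Function.Injective f)
    {P : R[X]}
    (hP : ∀ a, taylor (f a) P = P) (hdeg : P.natDegree < Nat.card G) : P = C (P.eval 0) := by
  have := Fintype.ofFinite G
  refine eq_of_natDegree_lt_card_of_eval_eq _ _ hf (fun a => ?_) ?_
  · rw [eval_C, ← zero_add (f a), ← taylor_eval, hP a]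
  · simpa [Nat.card_eq_fintype_card] using hdeg

lemma one_mem_of_taylor_stable [Finite G] {f : G → K} (hf : Function.Injective f) {j : ℕ}
    (hjG : j ≤ Nat.card G) {U : Submodule K K[X]} (hUj : U ≤ degreeLT K j) (hU : U ≠ ⊥)
    (hstab : ∀ a, ∀ P ∈ U, taylor (f a) P ∈ U) : (1 : K[X]) ∈ U := by
  obtain ⟨P, hPU, hP0, hPfix⟩ := exists_ne_zero_forall_taylor_eq f hU hstab
  have hdeg : P.natDegree < Nat.card G :=
    ((natDegree_lt_iff_degree_lt hP0).mpr (mem_degreeLT.mp (hUj hPU))).trans_le hjG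
  have hPC := eq_C_of_forall_taylor_eq hf hPfix hdeg
  set c := P.eval 0
  have hc : c ≠ 0 := fun h => hP0 (by rw [hPC, h, C_0])
  have := U.smul_mem c⁻¹ hPU
  rwa [hPC, smul_eq_C_mul, ← C_mul, inv_mul_cancel₀ hc, C_1] at this

end TaylorStable

section PolynomialModel

variable {K : Type*} [Field K] {V : Type*} [AddCommGroup V] [Module K V]

def coeffCombination (θ : ℕ → V) : K[X] →ₗ[K] V :=
  lsum fun i => LinearMap.toSpanSingleton K V (θ i)

@[simp]
lemma coeffCombination_X_pow (θ : ℕ → V) (i : ℕ) : coeffCombination θ (X ^ i : K[X]) = θ i := by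
  simp [coeffCombination, X_pow_eq_monomial, sum_monomial_index]

lemma map_coeffCombination_degreeLT (θ : ℕ → V) (j : ℕ) :
    (degreeLT K j).map (coeffCombination θ) = Submodule.span K (θ '' {i | i < j}) := by
  classical
  rw [degreeLT_eq_span_X_pow, Submodule.map_span, Finset.coe_image, ← Set.image_comp]
  congr 1
  ext
  simp

variable {θ : ℕ → V} {j : ℕ} {T : V →ₗ[K] V} {r : K}

lemma coeffCombination_taylor
    (hT : ∀ i < j, T (θ i) = ∑ l ∈ Finset.range (i + 1), ((i.choose l : K) * r ^ (i - l)) • θ l)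
    {P : K[X]} (hP : P ∈ degreeLT K j) :
    T (coeffCombination θ P) = coeffCombination θ (taylor r P) := by
  classical
  rw [degreeLT_eq_span_X_pow] at hP
  refine LinearMap.eqOn_span (f := T ∘ₗ coeffCombination θ) (g := coeffCombination θ ∘ₗ taylor r)
    ?_ hP
  intro Q hQ
  obtain ⟨i, hi, rfl⟩ := by simpa using hQ
  simp only [LinearMap.coe_comp, Function.comp_apply, coeffCombination_X_pow, hT i hi,
    taylor_X_pow, add_pow, map_sum]
  refine Finset.sum_congr rfl fun l _ => ?_
  rw [show X ^ l * C r ^ (i - l) * (i.choose l : K[X]) = ((i.choose l : K) * r ^ (i - l)) • X ^ l by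
    simp only [smul_eq_C_mul, C_mul, C_pow, map_natCast]; ring, map_smul, coeffCombination_X_pow]

lemma map_mem_span_image_lt
    (hT : ∀ i < j, T (θ i) = ∑ l ∈ Finset.range (i + 1), ((i.choose l : K) * r ^ (i - l)) • θ l)
    {v : V} (hv : v ∈ Submodule.span K (θ '' {i | i < j})) :
    T v ∈ Submodule.span K (θ '' {i | i < j}) := by
  rw [← map_coeffCombination_degreeLT] at hv ⊢
  obtain ⟨P, hP, rfl⟩ := hv
  rw [coeffCombination_taylor hT hP]
  exact Submodule.mem_map_of_mem (taylor_mem_degreeLT r hP)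

lemma theta_zero_mem_of_stable {G : Type*} [Finite G] {f : G → K} (hf : Function.Injective f)
    (hjG : j ≤ Nat.card G) {T : G → V →ₗ[K] V}
    (hT : ∀ a, ∀ i < j,
      T a (θ i) = ∑ l ∈ Finset.range (i + 1), ((i.choose l : K) * f a ^ (i - l)) • θ l)
    {U : Submodule K V} (hUj : U ≤ Submodule.span K (θ '' {i | i < j})) (hU : U ≠ ⊥)
    (hstab : ∀ a, ∀ v ∈ U, T a v ∈ U) : θ 0 ∈ U := by
  set U' := U.comap (coeffCombination θ) ⊓ degreeLT K j
  have hU' : U' ≠ ⊥ := by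
    obtain ⟨u, hu, hu0⟩ := U.ne_bot_iff.mp hU
    obtain ⟨P, hP, rfl⟩ : u ∈ (degreeLT K j).map (coeffCombination θ) := by
      rw [map_coeffCombination_degreeLT]
      exact hUj hu
    exact U'.ne_bot_iff.mpr ⟨P, Submodule.mem_inf.mpr ⟨hu, hP⟩, fun h => hu0 (by rw [h, map_zero])⟩
  have hstab' : ∀ a, ∀ P ∈ U', taylor (f a) P ∈ U' := by
    intro a P hP
    obtain ⟨hPU, hPj⟩ := Submodule.mem_inf.mp hP
    refine Submodule.mem_inf.mpr ⟨?_, taylor_mem_degreeLT _ hPj⟩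
    rw [Submodule.mem_comap, ← coeffCombination_taylor (hT a) hPj]
    exact hstab a _ hPU
  have h1 := (Submodule.mem_inf.mp (one_mem_of_taylor_stable hf hjG inf_le_right hU' hstab')).1
  rwa [Submodule.mem_comap, ← pow_zero X, coeffCombination_X_pow] at h1

end PolynomialModel

lemma pow_le_natCard_galoisField (p n : ℕ) [Fact p.Prime] : p ^ n ≤ Nat.card (GaloisField p n) := by
  rcases Nat.eq_zero_or_pos n with rfl | hn
  · exact pow_zero p ▸ Nat.card_pos
  · exact (GaloisField.card p n hn.ne').ge

theorem W_j_indecomposable_general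
    (p n : ℕ) [Fact p.Prime]
    (K : Type) [Field K]
    (ι : GaloisField p n →+* K)
    (V : Type) [AddCommGroup V] [Module K V]
    (θ : ℕ → V) (hθ : LinearIndependent K fun i : Fin (p ^ n) => θ i)
    (ρ : Representation K (Multiplicative (GaloisField p n)) V)
    (hρ : ∀ a : GaloisField p n, ∀ i < p ^ n,
      ρ (Multiplicative.ofAdd a) (θ i)
        = ∑ l ∈ Finset.range (i + 1), ((i.choose l : K) * (ι a) ^ (i - l)) • θ l) :
    ∀ j, 1 ≤ j → j ≤ p ^ n →
      (∀ a : GaloisField p n, ∀ v ∈ Submodule.span K (θ '' {i | i < j}),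
        ρ (Multiplicative.ofAdd a) v ∈ Submodule.span K (θ '' {i | i < j})) ∧
      ¬ ∃ A B : Submodule K V,
        A ≤ Submodule.span K (θ '' {i | i < j}) ∧ B ≤ Submodule.span K (θ '' {i | i < j}) ∧
        (∀ a : GaloisField p n, ∀ v ∈ A, ρ (Multiplicative.ofAdd a) v ∈ A) ∧
        (∀ a : GaloisField p n, ∀ v ∈ B, ρ (Multiplicative.ofAdd a) v ∈ B) ∧
        A ⊔ B = Submodule.span K (θ '' {i | i < j}) ∧ A ⊓ B = ⊥ ∧ A ≠ ⊥ ∧ B ≠ ⊥ := by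
  intro j _ hjq
  have hT : ∀ a : GaloisField p n, ∀ i < j, ρ (Multiplicative.ofAdd a) (θ i)
      = ∑ l ∈ Finset.range (i + 1), ((i.choose l : K) * (ι a) ^ (i - l)) • θ l :=
    fun a i hi => hρ a i (hi.trans_le hjq)
  have hjG : j ≤ Nat.card (GaloisField p n) := hjq.trans (pow_le_natCard_galoisField p n)
  refine ⟨fun a v hv => map_mem_span_image_lt (hT a) hv, ?_⟩
  rintro ⟨A, B, hA, hB, hAs, hBs, -, hAB, hA0, hB0⟩
  have hθ0 : θ 0 ∈ A ⊓ B :=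
    ⟨theta_zero_mem_of_stable ι.injective hjG hT hA hA0 hAs,
      theta_zero_mem_of_stable ι.injective hjG hT hB hB0 hBs⟩
  rw [hAB, Submodule.mem_bot] at hθ0
  exact hθ.ne_zero ⟨0, pow_pos (Fact.out : p.Prime).pos n⟩ hθ0

/-- Let `K` be algebraically closed of characteristic `p`, `q = p^n`, and let the additive
group `G = 𝔽_q` act on `W_j = span_K(θ_0, ..., θ_{j-1})` by
`σ_a(θ_i) = Σ_{l=0}^i C(i,l) a^{i-l} θ_l` (via an embedding `ι : 𝔽_q → K`).  Then each
`W_j`, `1 ≤ j ≤ p^n`, is `G`-stable and an indecomposable `K[G]`-module. -/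
theorem W_j_indecomposable
    (p n : ℕ) [Fact p.Prime] (hn : 1 ≤ n)
    (K : Type) [Field K] [IsAlgClosed K] [CharP K p]
    (ι : GaloisField p n →+* K)
    (V : Type) [AddCommGroup V] [Module K V]
    (θ : ℕ → V) (hθ : LinearIndependent K fun i : Fin (p ^ n) => θ i)
    (ρ : Representation K (Multiplicative (GaloisField p n)) V)
    (hρ : ∀ a : GaloisField p n, ∀ i < p ^ n,
      ρ (Multiplicative.ofAdd a) (θ i)
        = ∑ l ∈ Finset.range (i + 1), ((i.choose l : K) * (ι a) ^ (i - l)) • θ l) :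
    ∀ j, 1 ≤ j → j ≤ p ^ n →
      (∀ a : GaloisField p n, ∀ v ∈ Submodule.span K (θ '' {i | i < j}),
        ρ (Multiplicative.ofAdd a) v ∈ Submodule.span K (θ '' {i | i < j})) ∧
      ¬ ∃ A B : Submodule K V,
        A ≤ Submodule.span K (θ '' {i | i < j}) ∧ B ≤ Submodule.span K (θ '' {i | i < j}) ∧
        (∀ a : GaloisField p n, ∀ v ∈ A, ρ (Multiplicative.ofAdd a) v ∈ A) ∧
        (∀ a : GaloisField p n, ∀ v ∈ B, ρ (Multiplicative.ofAdd a) v ∈ B) ∧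
        A ⊔ B = Submodule.span K (θ '' {i | i < j}) ∧ A ⊓ B = ⊥ ∧ A ≠ ⊥ ∧ B ≠ ⊥ :=
  W_j_indecomposable_general p n K ι V θ hθ ρ hρ
end
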